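/- arXiv:2003.10501 — 4 statements merged into one kernel-verified Lean document; each statement's English description precedes it below -/
import Mathlib

section
/- Let n ≥ 1, let U be a connected open subset of ℝ^{n+1}, let v be a nowhere-vanishing C^∞ vector field on U, and let Θ, Θ′ be C^∞ differential n-forms on U such that dΘ = 0, dΘ′ = 0, ι_{v(x)} Θ_x = 0 and ι_{v(x)} Θ′_x = 0 for all x ∈ U, and Θ_x ≠ 0 for every x ∈ U. Then there exists a unique C^∞ function h : U → ℝ with Θ′ = h·Θ, and this h satisfies dh ∧ Θ = 0 identically on U. -/
/-!
At a point `x`, both `Θ_x` and `Θ'_x` are `n`-forms on an `(n+1)`-dimensional space with vanishing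
interior product against `v(x) ≠ 0`. Extending `v(x)` to a basis, such a form is determined by its
value on the other `n` basis vectors, so `Θ'_x = h(x) Θ_x`. Near `x`, `h = Θ'(w) / Θ(w)` for a fixed
tuple `w` with `Θ_x(w) ≠ 0`, hence `h` is smooth, and the Leibniz rule
`d(hΘ) = dh ∧ Θ + h dΘ` applied to the closed forms `Θ' = hΘ` and `Θ` gives `dh ∧ Θ = 0`.
-/

open scoped BigOperators

noncomputable section

/-- `ℝ^{n+1}` for `n = m + 1`. -/
abbrev Eucl (m : ℕ) := EuclideanSpace ℝ (Fin (m + 2))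

/-- The exterior derivative of a `C^∞` `k`-form `Θ` at `x`, evaluated on `k + 1` vectors. -/
def extDerivEval {m k : ℕ} (Θ : Eucl m → (Eucl m [⋀^Fin k]→ₗ[ℝ] ℝ)) (x : Eucl m)
    (w : Fin (k + 1) → Eucl m) : ℝ :=
  ∑ i : Fin (k + 1), (-1 : ℝ) ^ (i : ℕ) * fderiv ℝ (fun y => Θ y (i.removeNth w)) x (w i)

theorem Module.exists_basis_fin_zero_eq {K V : Type*} [Field K] [AddCommGroup V] [Module K V]
    {n : ℕ} (hV : Module.finrank K V = n + 1) {v : V} (hv : v ≠ 0) :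
    ∃ b : Module.Basis (Fin (n + 1)) K V, b 0 = v := by
  have hli : LinearIndepOn K id {v} := (linearIndepOn_singleton_iff K).mpr hv
  let b := Module.Basis.extend hli
  let i₀ : hli.extend (Set.subset_univ _) := ⟨v, hli.subset_extend _ rfl⟩
  have : Module.Finite K V := Module.finite_of_finrank_eq_succ hV
  have hcard : Nat.card (hli.extend (Set.subset_univ _)) = n + 1 := by
    rw [← hV, Module.finrank_eq_nat_card_basis b]
  let e := (Finite.equivFinOfCardEq hcard).trans (Equiv.swap (Finite.equivFinOfCardEq hcard i₀) 0)
  refine ⟨b.reindex e, ?_⟩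
  simp [e, b, i₀]

namespace AlternatingMap

variable {R M N : Type*} [CommRing R] [AddCommGroup M] [Module R M] [AddCommGroup N] [Module R N]
  {k : ℕ}

theorem map_eq_zero_of_curryLeft_eq_zero {θ : M [⋀^Fin (k + 1)]→ₗ[R] N} {x : M}
    (hθ : θ.curryLeft x = 0) {u : Fin (k + 1) → M} (hx : x ∈ Set.range u) : θ u = 0 := by
  obtain ⟨j, rfl⟩ := hx
  have hcons (u' : Fin (k + 1) → M) (h0 : u' 0 = u j) : θ u' = 0 := by
    rw [← Fin.cons_self_tail u', h0]
    exact DFunLike.congr_fun hθ (Fin.tail u')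
  rcases eq_or_ne (0 : Fin (k + 1)) j with rfl | h0j
  · exact hcons u rfl
  · rw [← neg_eq_zero, ← θ.map_swap u h0j]
    exact hcons _ (by simp)

theorem eq_zero_of_curryLeft_basis_zero_eq_zero (b : Module.Basis (Fin (k + 2)) R M)
    {θ : M [⋀^Fin (k + 1)]→ₗ[R] N} (hθ : θ.curryLeft (b 0) = 0) (htail : θ (Fin.tail b) = 0) :
    θ = 0 := by
  -- An injective tuple of basis vectors either contains `b 0` or permutes `Fin.tail b`.
  refine b.ext_alternating fun v hv => ?_
  rw [zero_apply]
  by_cases h0 : ∃ j, v j = 0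
  · obtain ⟨j, hj⟩ := h0
    exact map_eq_zero_of_curryLeft_eq_zero hθ ⟨j, by simp [hj]⟩
  · rw [not_exists] at h0
    have hσ : Function.Injective fun i => (v i).pred (h0 i) := fun i i' hii' =>
      hv (by simpa using congrArg Fin.succ hii')
    let σ := Equiv.ofBijective _ (Finite.injective_iff_bijective.mp hσ)
    have hv : (fun i => b (v i)) = Fin.tail b ∘ σ := by
      funext i
      simp [σ, Fin.tail]
    rw [hv, θ.map_perm, htail, smul_zero]

theorem smul_eq_smul_of_curryLeft_basis_zero_eq_zero (b : Module.Basis (Fin (k + 2)) R M)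
    {θ θ' : M [⋀^Fin (k + 1)]→ₗ[R] R} (hθ : θ.curryLeft (b 0) = 0)
    (hθ' : θ'.curryLeft (b 0) = 0) : θ (Fin.tail b) • θ' = θ' (Fin.tail b) • θ := by
  rw [← sub_eq_zero]
  refine eq_zero_of_curryLeft_basis_zero_eq_zero b ?_ ?_
  · ext w
    have h := DFunLike.congr_fun hθ w
    have h' := DFunLike.congr_fun hθ' w
    simp only [curryLeft_apply_apply, zero_apply] at h h'
    simp [h, h']
  · simp [mul_comm]

theorem exists_eq_smul_of_curryLeft_eq_zero {K V : Type*} [Field K] [AddCommGroup V]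
    [Module K V] (hV : Module.finrank K V = k + 2) {v : V} (hv : v ≠ 0)
    {θ θ' : V [⋀^Fin (k + 1)]→ₗ[K] K} (hθ : θ.curryLeft v = 0) (hθ' : θ'.curryLeft v = 0)
    (hne : θ ≠ 0) : ∃ c : K, θ' = c • θ := by
  obtain ⟨b, rfl⟩ := Module.exists_basis_fin_zero_eq hV hv
  have htail : θ (Fin.tail b) ≠ 0 := fun h => hne (eq_zero_of_curryLeft_basis_zero_eq_zero b hθ h)
  refine ⟨θ' (Fin.tail b) / θ (Fin.tail b), ?_⟩
  rw [div_eq_inv_mul, mul_smul, ← smul_eq_smul_of_curryLeft_basis_zero_eq_zero b hθ hθ',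
    inv_smul_smul₀ htail]

end AlternatingMap

theorem ContDiffOn.of_eq_smul {𝕜 E α : Type*} [NontriviallyNormedField 𝕜] [NormedAddCommGroup E]
    [NormedSpace 𝕜 E] {n : WithTop ℕ∞} {U : Set E} (hU : IsOpen U) {f g : E → α → 𝕜}
    {h : E → 𝕜} (hf : ∀ a, ContDiffOn 𝕜 n (fun x => f x a) U)
    (hg : ∀ a, ContDiffOn 𝕜 n (fun x => g x a) U) (hf0 : ∀ x ∈ U, f x ≠ 0)
    (hgf : ∀ x ∈ U, g x = h x • f x) : ContDiffOn 𝕜 n h U := by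
  intro x hx
  obtain ⟨a, ha⟩ := Function.ne_iff.mp (hf0 x hx)
  have hratio : h =ᶠ[nhds x] fun y => g y a / f y a := by
    filter_upwards [hU.mem_nhds hx,
      ((hf a).continuousOn.continuousAt (hU.mem_nhds hx)).eventually_ne ha] with y hy hya
    rw [hgf y hy, Pi.smul_apply, smul_eq_mul, mul_div_cancel_right₀ _ hya]
  have hcd : ContDiffAt 𝕜 n (fun y => g y a / f y a) x :=
    ((hg a).contDiffAt (hU.mem_nhds hx)).div ((hf a).contDiffAt (hU.mem_nhds hx)) ha
  exact (hcd.congr_of_eventuallyEq hratio).contDiffWithinAt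

theorem extDerivEval_congr_of_eventuallyEq {m k : ℕ} {Θ Θ' : Eucl m → Eucl m [⋀^Fin k]→ₗ[ℝ] ℝ}
    {x : Eucl m} (hΘ : Θ =ᶠ[nhds x] Θ') : extDerivEval Θ x = extDerivEval Θ' x := by
  funext w
  unfold extDerivEval
  congr! 3 with i
  exact (hΘ.fun_comp fun θ => θ (i.removeNth w)).fderiv_eq

theorem extDerivEval_smul {m k : ℕ} {Θ : Eucl m → Eucl m [⋀^Fin k]→ₗ[ℝ] ℝ} {h : Eucl m → ℝ}
    {x : Eucl m} (hh : DifferentiableAt ℝ h x)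
    (hΘ : ∀ w, DifferentiableAt ℝ (fun y => Θ y w) x) (w : Fin (k + 1) → Eucl m) :
    extDerivEval (fun y => h y • Θ y) x w =
      ∑ i : Fin (k + 1), (-1 : ℝ) ^ (i : ℕ) * fderiv ℝ h x (w i) * Θ x (i.removeNth w) +
        h x * extDerivEval Θ x w := by
  simp only [extDerivEval, AlternatingMap.smul_apply, smul_eq_mul, Finset.mul_sum,
    ← Finset.sum_add_distrib]
  refine Finset.sum_congr rfl fun i _ => ?_
  rw [fderiv_fun_mul hh (hΘ _)]
  simp only [add_apply, smul_apply, smul_eq_mul]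
  ring

theorem proportionality_of_dual_forms_general (m : ℕ)
    (U : Set (Eucl m)) (hU : IsOpen U)
    (v : Eucl m → Eucl m)
    (hv0 : ∀ x ∈ U, v x ≠ 0)
    (Θ Θ' : Eucl m → (Eucl m [⋀^Fin (m + 1)]→ₗ[ℝ] ℝ))
    (hΘ : ∀ w : Fin (m + 1) → Eucl m, ContDiffOn ℝ (⊤ : ℕ∞) (fun x => Θ x w) U)
    (hΘ' : ∀ w : Fin (m + 1) → Eucl m, ContDiffOn ℝ (⊤ : ℕ∞) (fun x => Θ' x w) U)
    (hclosed : ∀ x ∈ U, ∀ w : Fin (m + 2) → Eucl m, extDerivEval Θ x w = 0)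
    (hclosed' : ∀ x ∈ U, ∀ w : Fin (m + 2) → Eucl m, extDerivEval Θ' x w = 0)
    (hhoriz : ∀ x ∈ U, ∀ w : Fin m → Eucl m, Θ x (Fin.cons (v x) w) = 0)
    (hhoriz' : ∀ x ∈ U, ∀ w : Fin m → Eucl m, Θ' x (Fin.cons (v x) w) = 0)
    (hΘne : ∀ x ∈ U, Θ x ≠ 0) :
    ∃ h : Eucl m → ℝ,
      ContDiffOn ℝ (⊤ : ℕ∞) h U ∧
      (∀ x ∈ U, Θ' x = h x • Θ x) ∧
      (∀ x ∈ U, ∀ w : Fin (m + 2) → Eucl m,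
        ∑ i : Fin (m + 2), (-1 : ℝ) ^ (i : ℕ) *
          (fderiv ℝ h x (w i)) * Θ x (i.removeNth w) = 0) ∧
      (∀ h' : Eucl m → ℝ, ContDiffOn ℝ (⊤ : ℕ∞) h' U →
        (∀ x ∈ U, Θ' x = h' x • Θ x) → ∀ x ∈ U, h' x = h x) := by
  have hpt (x : Eucl m) : ∃ c : ℝ, x ∈ U → Θ' x = c • Θ x := by
    by_cases hx : x ∈ U
    · obtain ⟨c, hc⟩ := AlternatingMap.exists_eq_smul_of_curryLeft_eq_zero
        finrank_euclideanSpace_fin (hv0 x hx) (AlternatingMap.ext (hhoriz x hx))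
        (AlternatingMap.ext (hhoriz' x hx)) (hΘne x hx)
      exact ⟨c, fun _ => hc⟩
    · exact ⟨0, fun hx' => absurd hx' hx⟩
  choose h hprop using hpt
  have hsmooth : ContDiffOn ℝ (⊤ : ℕ∞) h U :=
    ContDiffOn.of_eq_smul (f := fun x w => Θ x w) (g := fun x w => Θ' x w) hU hΘ hΘ'
      (fun x hx hΘ0 => hΘne x hx (AlternatingMap.ext (congrFun hΘ0)))
      (fun x hx => by ext w; simp [hprop x hx])
  refine ⟨h, hsmooth, hprop, fun x hx w => ?_, fun h' _ hprop' x hx => ?_⟩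
  · have hΘ'x : Θ' =ᶠ[nhds x] fun y => h y • Θ y :=
      Filter.eventually_of_mem (hU.mem_nhds hx) hprop
    have hd := extDerivEval_smul ((hsmooth.contDiffAt (hU.mem_nhds hx)).differentiableAt (by simp))
      (fun w => ((hΘ w).contDiffAt (hU.mem_nhds hx)).differentiableAt (by simp)) w
    rwa [← extDerivEval_congr_of_eventuallyEq hΘ'x, hclosed' x hx, hclosed x hx, mul_zero,
      add_zero, eq_comm] at hd
  · exact smul_left_injective ℝ (hΘne x hx) ((hprop' x hx).symm.trans (hprop x hx))

/-- Let `n ≥ 1` (here `n = m + 1`), let `U ⊆ ℝ^{n+1}` be connected and open,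
let `v` be a nowhere-vanishing `C^∞` vector field on `U`, and let `Θ, Θ′` be `C^∞` differential
`n`-forms on `U` which are closed, `v`-horizontal, with `Θ_x ≠ 0` everywhere on `U`.  Then
there is a unique `C^∞` function `h : U → ℝ` with `Θ′ = h·Θ` on `U`, and this `h` satisfies
`dh ∧ Θ = 0` identically on `U`. -/
theorem proportionality_of_dual_forms (m : ℕ)
    (U : Set (Eucl m)) (hU : IsOpen U) (hUconn : IsConnected U)
    (v : Eucl m → Eucl m) (hv : ContDiffOn ℝ (⊤ : ℕ∞) v U)
    (hv0 : ∀ x ∈ U, v x ≠ 0)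
    (Θ Θ' : Eucl m → (Eucl m [⋀^Fin (m + 1)]→ₗ[ℝ] ℝ))
    (hΘ : ∀ w : Fin (m + 1) → Eucl m, ContDiffOn ℝ (⊤ : ℕ∞) (fun x => Θ x w) U)
    (hΘ' : ∀ w : Fin (m + 1) → Eucl m, ContDiffOn ℝ (⊤ : ℕ∞) (fun x => Θ' x w) U)
    (hclosed : ∀ x ∈ U, ∀ w : Fin (m + 2) → Eucl m, extDerivEval Θ x w = 0)
    (hclosed' : ∀ x ∈ U, ∀ w : Fin (m + 2) → Eucl m, extDerivEval Θ' x w = 0)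
    (hhoriz : ∀ x ∈ U, ∀ w : Fin m → Eucl m, Θ x (Fin.cons (v x) w) = 0)
    (hhoriz' : ∀ x ∈ U, ∀ w : Fin m → Eucl m, Θ' x (Fin.cons (v x) w) = 0)
    (hΘne : ∀ x ∈ U, Θ x ≠ 0) :
    ∃ h : Eucl m → ℝ,
      ContDiffOn ℝ (⊤ : ℕ∞) h U ∧
      (∀ x ∈ U, Θ' x = h x • Θ x) ∧
      (∀ x ∈ U, ∀ w : Fin (m + 2) → Eucl m,
        ∑ i : Fin (m + 2), (-1 : ℝ) ^ (i : ℕ) *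
          (fderiv ℝ h x (w i)) * Θ x (i.removeNth w) = 0) ∧
      (∀ h' : Eucl m → ℝ, ContDiffOn ℝ (⊤ : ℕ∞) h' U →
        (∀ x ∈ U, Θ' x = h' x • Θ x) → ∀ x ∈ U, h' x = h x) :=
  proportionality_of_dual_forms_general m U hU v hv0 Θ Θ' hΘ hΘ' hclosed hclosed' hhoriz hhoriz'
    hΘne
end
end

section
/- Let n ≥ 1, let V be an oriented real vector space of dimension n + 1, let α be a nonzero linear form on V, and let Θ be a nonzero alternating n-linear form on V such that the (n+1)-form α ∧ Θ is a positively oriented volume form on V (i.e. α ∧ Θ takes a positive value on some, equivalently every, positively oriented basis). Then there exist an inner product g on V and a vector u ∈ V such that: u is the g-dual of α (i.e. α(w) = g(u, w) for all w ∈ V), Θ = ι_u vol_g, and α ∧ Θ = vol_g, where vol_g is the alternating (n+1)-form taking the value 1 on every positively oriented g-orthonormal basis of V. -/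
/-!
Put `μ = α ∧ Θ`; it is nonzero because it is positive on oriented bases. The map `u ↦ ι_u μ`
is injective (as `α ∧ ι_u μ = α(u) μ` for a top-degree form `μ`) from `V` into the space of
`n`-forms, which also has dimension `n + 1`, so `Θ = ι_u μ` for some `u`, and then
`μ = α ∧ ι_u μ = α(u) μ` forces `α(u) = 1`. Complete `u` by a basis of `ker α`, rescaled so
that `μ` is `1` on the resulting basis, and let `g` be the metric making this basis
orthonormal: then `vol_g = μ` and `u` is the `g`-dual of `α`.
-/

open scoped BigOperators

noncomputable def wedgeOneForm {V : Type*} [AddCommGroup V] [Module ℝ V] {k : ℕ}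
    (α : V →ₗ[ℝ] ℝ) (Θ : V [⋀^Fin k]→ₗ[ℝ] ℝ) (w : Fin (k + 1) → V) : ℝ :=
  ∑ i : Fin (k + 1), (-1 : ℝ) ^ (i : ℕ) * α (w i) * Θ (i.removeNth w)

open Module

namespace AlternatingMap

section CommRing

variable {R M N : Type*} [CommRing R] [AddCommGroup M] [Module R M] [AddCommGroup N] [Module R N]
  {n : ℕ}

theorem eq_of_apply_basis_eq {ι : Type*} [Fintype ι] [DecidableEq ι] (b : Basis ι R M)
    {f g : M [⋀^ι]→ₗ[R] R} (h : f b = g b) : f = g := by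
  rw [f.eq_smul_basis_det b, g.eq_smul_basis_det b, h]

theorem map_vecCons_removeNth_self (f : M [⋀^Fin (n + 1)]→ₗ[R] N) (v : Fin (n + 1) → M)
    (i : Fin (n + 1)) : f (Matrix.vecCons (v i) (i.removeNth v)) = (-1) ^ (i : ℕ) • f v := by
  rw [← f.neg_one_pow_smul_map_insertNth, Fin.insertNth_self_removeNth]

theorem map_vecCons_removeNth_of_ne (f : M [⋀^Fin (n + 1)]→ₗ[R] N) (v : Fin (n + 1) → M)
    {i k : Fin (n + 1)} (hki : k ≠ i) : f (Matrix.vecCons (v k) (i.removeNth v)) = 0 := by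
  obtain ⟨j, rfl⟩ := Fin.exists_succAbove_eq hki
  exact f.map_eq_zero_of_eq _ (i := 0) (j := j.succ) rfl (Fin.succ_ne_zero j).symm

/-- `α ∧ ι_u ω = α(u) ω` for a form `ω` of top degree. -/
theorem alternatizeUncurryFin_smulRight_curryLeft [Free R M] [Module.Finite R M]
    [StrongRankCondition R] (hM : finrank R M = n + 1) (α : M →ₗ[R] R)
    (ω : M [⋀^Fin (n + 1)]→ₗ[R] R) (u : M) :
    alternatizeUncurryFin (α.smulRight (ω.curryLeft u)) = α u • ω := by
  let b := finBasisOfFinrankEq R M hM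
  have key (k : Fin (n + 1)) :
      alternatizeUncurryFin (α.smulRight (ω.curryLeft (b k))) = α (b k) • ω := by
    refine eq_of_apply_basis_eq b ?_
    simp only [alternatizeUncurryFin_apply, LinearMap.coe_smulRight, smul_apply,
      curryLeft_apply_apply, smul_eq_mul]
    rw [Fintype.sum_eq_single k fun i hik => by rw [ω.map_vecCons_removeNth_of_ne b hik.symm,
      mul_zero, smul_zero], map_vecCons_removeNth_self, mul_smul_comm, smul_smul, ← pow_add,
      Even.neg_one_pow ⟨k, rfl⟩, one_smul]
  exact LinearMap.congr_fun (b.ext (f₁ := alternatizeUncurryFinLM ∘ₗ LinearMap.smulRightₗ α ∘ₗ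
    ω.curryLeft) (f₂ := α.smulRight ω) key) u

end CommRing

section Field

variable {K M : Type*} [Field K] [AddCommGroup M] [Module K M] {n : ℕ}

theorem curryLeft_injective (hM : finrank K M = n + 1) {ω : M [⋀^Fin (n + 1)]→ₗ[K] K}
    (hω : ω ≠ 0) : Function.Injective ω.curryLeft := by
  have : FiniteDimensional K M := Module.finite_of_finrank_pos (by omega)
  refine (injective_iff_map_eq_zero _).mpr fun u hu => ?_
  refine (forall_dual_apply_eq_zero_iff K u).mp fun α => ?_
  have h := alternatizeUncurryFin_smulRight_curryLeft hM α ω u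
  rw [hu, LinearMap.smulRight_zero, ← alternatizeUncurryFinLM_apply, LinearMap.map_zero] at h
  exact (smul_eq_zero.mp h.symm).resolve_right hω

theorem finrank_alternatingMap_fin [FiniteDimensional K M] (hM : finrank K M = n + 1) :
    finrank K (M [⋀^Fin n]→ₗ[K] K) = n + 1 := by
  rw [exteriorPower.alternatingMapLinearEquiv.finrank_eq, Subspace.dual_finrank_eq,
    exteriorPower.finrank_eq, hM, Nat.choose_succ_self_right]

theorem curryLeft_surjective (hM : finrank K M = n + 1) {ω : M [⋀^Fin (n + 1)]→ₗ[K] K}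
    (hω : ω ≠ 0) : Function.Surjective ω.curryLeft := by
  have : FiniteDimensional K M := Module.finite_of_finrank_pos (by omega)
  have : FiniteDimensional K (M [⋀^Fin n]→ₗ[K] K) :=
    Module.Finite.equiv exteriorPower.alternatingMapLinearEquiv.symm
  exact (LinearMap.injective_iff_surjective_of_finrank_eq_finrank
    (hM.trans (finrank_alternatingMap_fin hM).symm)).mp (curryLeft_injective hM hω)

end Field

end AlternatingMap

namespace Module.Basis

variable {ι R M : Type*} [Fintype ι] [DecidableEq ι] [CommRing R] [AddCommGroup M] [Module R M]

theorem toDual_apply_eq_sum (b : Basis ι R M) (x y : M) :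
    b.toDual x y = ∑ i, b.repr x i * b.repr y i := by
  conv_lhs => rw [← b.sum_repr y]
  simp only [map_sum, map_smul, toDual_apply_left, smul_eq_mul, mul_comm]

theorem toDual_comm (b : Basis ι R M) (x y : M) : b.toDual x y = b.toDual y x := by
  simp only [toDual_apply_eq_sum, mul_comm]

variable [LinearOrder R] [IsStrictOrderedRing R]

theorem toDual_self_pos (b : Basis ι R M) {x : M} (hx : x ≠ 0) : 0 < b.toDual x x := by
  obtain ⟨i, hi⟩ : ∃ i, b.repr x i ≠ 0 := by
    by_contra! h
    exact hx (b.repr.map_eq_zero_iff.mp (Finsupp.ext h))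
  rw [toDual_apply_eq_sum]
  exact Finset.sum_pos' (fun i _ => mul_self_nonneg _) ⟨i, Finset.mem_univ i, mul_self_pos.mpr hi⟩

theorem orientation_eq_of_pos {μ : M [⋀^ι]→ₗ[R] R} (b c : Basis ι R M) (hb : 0 < μ b)
    (hc : 0 < μ c) : b.orientation = c.orientation := by
  rw [orientation_eq_iff_det_pos]
  rw [μ.eq_smul_basis_det b, AlternatingMap.smul_apply, smul_eq_mul] at hc
  exact pos_of_mul_pos_right hc hb.le

theorem det_eq_one_of_toDual_orthonormal (b c : Basis ι R M)
    (hc : ∀ i j, b.toDual (c i) (c j) = if i = j then 1 else 0)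
    (ho : b.orientation = c.orientation) : b.det c = 1 := by
  have horth : (b.toMatrix c).transpose * b.toMatrix c = 1 := by
    ext i j
    simp [Matrix.mul_apply, toMatrix_apply, ← hc, toDual_apply_eq_sum, Matrix.one_apply]
  have hsq : b.det c * b.det c = 1 := by
    simpa [det_apply, Matrix.det_mul, Matrix.det_transpose] using congr_arg Matrix.det horth
  have hpos : 0 < b.det c := (orientation_eq_iff_det_pos b c).mp ho
  nlinarith

end Module.Basis

section AdaptedBasis

variable {K M : Type*} [Field K] [AddCommGroup M] [Module K M] {n : ℕ}

theorem exists_basis_zero_eq_apply_succ_eq_zero (hM : finrank K M = n + 1) {α : M →ₗ[K] K}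
    {u : M} (hu : α u = 1) :
    ∃ e : Basis (Fin (n + 1)) K M, e 0 = u ∧ ∀ j : Fin n, α (e j.succ) = 0 := by
  have : FiniteDimensional K M := Module.finite_of_finrank_pos (by omega)
  have hker : finrank K (LinearMap.ker α) = n := by
    have hrange : LinearMap.range α = ⊤ :=
      LinearMap.range_eq_top.mpr fun c => ⟨c • u, by simp [hu]⟩
    have := LinearMap.finrank_range_add_finrank_ker α
    rw [hrange, finrank_top, finrank_self, hM] at this
    omega
  let e := Basis.mkFinCons u (finBasisOfFinrankEq K _ hker)
    (fun c x hx hcx => by simpa [hu, LinearMap.mem_ker.mp hx] using congr_arg α hcx)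
    (fun z => ⟨-α z, by simp [hu]⟩)
  exact ⟨e, by simp [e], fun j => by simp [e]⟩

/-- Rescale the last vector, which lies in `ker α` because `n ≠ 0`. -/
theorem exists_basis_zero_eq_apply_succ_eq_zero_map_eq_one (hn : n ≠ 0)
    (hM : finrank K M = n + 1) {α : M →ₗ[K] K} {u : M} (hu : α u = 1)
    {μ : M [⋀^Fin (n + 1)]→ₗ[K] K} (hμ : μ ≠ 0) :
    ∃ e : Basis (Fin (n + 1)) K M, e 0 = u ∧ (∀ j : Fin n, α (e j.succ) = 0) ∧ μ e = 1 := by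
  obtain ⟨e, he0, he_succ⟩ := exists_basis_zero_eq_apply_succ_eq_zero hM hu
  have hμe : μ e ≠ 0 := fun h => hμ (by rw [μ.eq_smul_basis_det e, h, zero_smul])
  let w : Fin (n + 1) → Kˣ := Pi.mulSingle (Fin.last n) (Units.mk0 _ (inv_ne_zero hμe))
  have hw0 : w 0 = 1 := Pi.mulSingle_eq_of_ne (by simpa [Fin.ext_iff] using hn.symm) _
  refine ⟨e.unitsSMul w, ?_, ?_, ?_⟩
  · rw [Basis.unitsSMul_apply, hw0, one_smul, he0]
  · intro j
    rw [Basis.unitsSMul_apply, Units.smul_def, map_smul, he_succ, smul_zero]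
  · rw [μ.eq_smul_basis_det e, AlternatingMap.smul_apply, Basis.det_unitsSMul_self,
      ← Units.coe_prod, Fintype.prod_pi_mulSingle', Units.val_mk0, smul_eq_mul, mul_inv_cancel₀ hμe]

end AdaptedBasis

theorem wedgeOneForm_eq_alternatizeUncurryFin {V : Type*} [AddCommGroup V] [Module ℝ V] {k : ℕ}
    (α : V →ₗ[ℝ] ℝ) (Θ : V [⋀^Fin k]→ₗ[ℝ] ℝ) (w : Fin (k + 1) → V) :
    wedgeOneForm α Θ w = AlternatingMap.alternatizeUncurryFin (α.smulRight Θ) w := by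
  simp [wedgeOneForm, AlternatingMap.alternatizeUncurryFin_apply, mul_assoc]

theorem calabi_metric_for_dual_pair_general (n : ℕ) (hn : 1 ≤ n) (V : Type*)
    [AddCommGroup V] [Module ℝ V]
    (hdim : Module.finrank ℝ V = n + 1)
    (o : Orientation ℝ V (Fin (n + 1)))
    (α : V →ₗ[ℝ] ℝ)
    (Θ : V [⋀^Fin n]→ₗ[ℝ] ℝ)
    (hpos : ∀ b : Module.Basis (Fin (n + 1)) ℝ V, b.orientation = o → 0 < wedgeOneForm α Θ ⇑b) :
    ∃ (g : V →ₗ[ℝ] V →ₗ[ℝ] ℝ) (u : V) (volg : V [⋀^Fin (n + 1)]→ₗ[ℝ] ℝ),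
      (∀ x y : V, g x y = g y x) ∧
      (∀ x : V, x ≠ 0 → 0 < g x x) ∧
      (∀ b : Module.Basis (Fin (n + 1)) ℝ V,
        (∀ i j, g (b i) (b j) = if i = j then 1 else 0) → b.orientation = o → volg ⇑b = 1) ∧
      (∀ w : V, α w = g u w) ∧
      (∀ w : Fin n → V, Θ w = volg (Fin.cons u w)) ∧
      (∀ w : Fin (n + 1) → V, wedgeOneForm α Θ w = volg w) := by
  have : FiniteDimensional ℝ V := Module.finite_of_finrank_pos (by omega)
  set μ := AlternatingMap.alternatizeUncurryFin (α.smulRight Θ)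
  have hμpos (b : Basis (Fin (n + 1)) ℝ V) (hb : b.orientation = o) : 0 < μ b :=
    wedgeOneForm_eq_alternatizeUncurryFin α Θ b ▸ hpos b hb
  have hμ : μ ≠ 0 := fun h => by
    simpa [h] using hμpos _ ((finBasisOfFinrankEq ℝ V hdim).orientation_adjustToOrientation o)
  obtain ⟨u, hu⟩ := AlternatingMap.curryLeft_surjective hdim hμ Θ
  have hαu : α u = 1 := by
    have h := AlternatingMap.alternatizeUncurryFin_smulRight_curryLeft hdim α μ u
    rw [hu] at h
    exact smul_left_injective ℝ hμ (by simpa using h.symm)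
  obtain ⟨c, hc0, hc_succ, hμc⟩ :=
    exists_basis_zero_eq_apply_succ_eq_zero_map_eq_one (by omega) hdim hαu hμ
  refine ⟨c.toDual, u, μ, c.toDual_comm, fun x hx => c.toDual_self_pos hx, ?_, ?_, ?_,
    wedgeOneForm_eq_alternatizeUncurryFin α Θ⟩
  · intro b hb hbo
    have hcb := c.orientation_eq_of_pos b (hμc ▸ one_pos) (hμpos b hbo)
    rw [μ.eq_smul_basis_det c, AlternatingMap.smul_apply, hμc, one_smul,
      c.det_eq_one_of_toDual_orthonormal b hb hcb]
  · have hαc : α = c.toDual u := c.ext fun i => Fin.cases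
      (by rw [← hc0, c.toDual_apply, if_pos rfl, hc0, hαu])
      (fun j => by rw [hc_succ j, ← hc0, c.toDual_apply, if_neg (Fin.succ_ne_zero j).symm]) i
    exact LinearMap.congr_fun hαc
  · intro w
    rw [← hu]
    rfl

/-- Let `n ≥ 1`, let `V` be an oriented real vector space of dimension
`n + 1`, let `α` be a nonzero linear form on `V`, and let `Θ` be a nonzero alternating
`n`-linear form on `V` such that `α ∧ Θ` is a positively oriented volume form (it is positive
on every positively oriented basis).  Then there exist an inner product `g` on `V` (a symmetric
positive-definite bilinear form) and a vector `u ∈ V` such that `u` is the `g`-dual of `α`,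
`Θ = ι_u vol_g` and `α ∧ Θ = vol_g`, where `vol_g` is the alternating `(n+1)`-form taking the
value `1` on every positively oriented `g`-orthonormal basis of `V`. -/
theorem calabi_metric_for_dual_pair (n : ℕ) (hn : 1 ≤ n) (V : Type*)
    [AddCommGroup V] [Module ℝ V]
    (hdim : Module.finrank ℝ V = n + 1)
    (o : Orientation ℝ V (Fin (n + 1)))
    (α : V →ₗ[ℝ] ℝ) (hα : α ≠ 0)
    (Θ : V [⋀^Fin n]→ₗ[ℝ] ℝ) (hΘ : Θ ≠ 0)
    (hpos : ∀ b : Module.Basis (Fin (n + 1)) ℝ V, b.orientation = o → 0 < wedgeOneForm α Θ ⇑b) :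
    ∃ (g : V →ₗ[ℝ] V →ₗ[ℝ] ℝ) (u : V) (volg : V [⋀^Fin (n + 1)]→ₗ[ℝ] ℝ),
      (∀ x y : V, g x y = g y x) ∧
      (∀ x : V, x ≠ 0 → 0 < g x x) ∧
      (∀ b : Module.Basis (Fin (n + 1)) ℝ V,
        (∀ i j, g (b i) (b j) = if i = j then 1 else 0) → b.orientation = o → volg ⇑b = 1) ∧
      (∀ w : V, α w = g u w) ∧
      (∀ w : Fin n → V, Θ w = volg (Fin.cons u w)) ∧
      (∀ w : Fin (n + 1) → V, wedgeOneForm α Θ w = volg w) :=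
  calabi_metric_for_dual_pair_general n hn V hdim o α Θ hpos
end

section
/- Let n ≥ 2, let V be a real vector space of dimension 2n, let ω be a nondegenerate alternating 2-form on V (i.e. for every nonzero v ∈ V there is w with ω(v,w) ≠ 0), let v ∈ V, and set W := {w ∈ V : ω(v, w) = 0}. Then the (2n−2)-form ω^{∧(n−1)} (the (n−1)-fold wedge power of ω) satisfies ω^{∧(n−1)}(v, w₁, …, w_{2n−3}) = 0 for all w₁, …, w_{2n−3} ∈ W. -/
open scoped BigOperators

/-- The `k`-fold wedge power of an alternating `2`-form `ω`, as a function of `2k` vectors.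
This is the full antisymmetrized sum over all permutations, which equals `2^k·k!` times the
shuffle-sum wedge power; the vanishing claim below is independent of this positive
normalization constant. -/
noncomputable def wedgePowTwoForm {V : Type*} [AddCommGroup V] [Module ℝ V]
    (ω : V [⋀^Fin 2]→ₗ[ℝ] ℝ) (k : ℕ) (z : Fin (2 * k) → V) : ℝ :=
  ∑ σ : Equiv.Perm (Fin (2 * k)), ((Equiv.Perm.sign σ : ℤ) : ℝ) *
    ∏ i : Fin k,
      ω ![z (σ ⟨2 * (i : ℕ), by have := i.isLt; omega⟩),
          z (σ ⟨2 * (i : ℕ) + 1, by have := i.isLt; omega⟩)]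

theorem AlternatingMap.map_vecCons_swap {R M N : Type*} [Semiring R] [AddCommMonoid M]
    [Module R M] [AddCommGroup N] [Module R N] (ω : M [⋀^Fin 2]→ₗ[R] N) (a b : M) :
    ω ![a, b] = -ω ![b, a] := by
  have hswap : ![b, a] ∘ Equiv.swap (0 : Fin 2) 1 = ![a, b] := by
    ext i
    fin_cases i <;> rfl
  rw [← ω.map_swap ![b, a] zero_ne_one, hswap]

/-- Every term of the antisymmetrization pairs `z j` with some other argument. -/
theorem wedgePowTwoForm_eq_zero_of_forall_apply_eq_zero {V : Type*} [AddCommGroup V]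
    [Module ℝ V] (ω : V [⋀^Fin 2]→ₗ[ℝ] ℝ) {k : ℕ} (z : Fin (2 * k) → V) (j : Fin (2 * k))
    (h : ∀ l, ω ![z j, z l] = 0) :
    wedgePowTwoForm ω k z = 0 := by
  refine Finset.sum_eq_zero fun σ _ => ?_
  set p := σ.symm j
  have hp : (p : ℕ) < 2 * k := p.isLt
  refine mul_eq_zero_of_right _ <|
    Finset.prod_eq_zero (i := ⟨p / 2, by omega⟩) (Finset.mem_univ _) ?_
  rcases Nat.even_or_odd' (p : ℕ) with ⟨r, hr | hr⟩
  · have hfst : (⟨2 * (p / 2), by omega⟩ : Fin (2 * k)) = p := Fin.ext (by simp only; omega)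
    rw [hfst, σ.apply_symm_apply]
    exact h _
  · have hsnd : (⟨2 * (p / 2) + 1, by omega⟩ : Fin (2 * k)) = p := Fin.ext (by simp only; omega)
    rw [hsnd, σ.apply_symm_apply, ω.map_vecCons_swap, h, neg_zero]

theorem hamiltonian_field_in_kernel_of_wedge_power_general (m : ℕ) (V : Type*)
    [AddCommGroup V] [Module ℝ V]
    (ω : V [⋀^Fin 2]→ₗ[ℝ] ℝ)
    (v : V) (w : Fin (2 * m + 1) → V)
    (hw : ∀ i, ω ![v, w i] = 0) :
    wedgePowTwoForm ω (m + 1) (Fin.cons v w) = 0 := by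
  refine wedgePowTwoForm_eq_zero_of_forall_apply_eq_zero ω _ 0 fun l => ?_
  refine Fin.cases ?_ hw l
  exact ω.map_eq_zero_of_eq ![v, v] (i := 0) (j := 1) rfl zero_ne_one

/-- Let `n ≥ 2` (here `n = m + 2`), let `V` be a real vector space of
dimension `2n`, let `ω` be a nondegenerate alternating `2`-form on `V`, let `v ∈ V`, and set
`W := {w : ω(v, w) = 0}`.  Then the `(2n−2)`-form `ω^{∧(n−1)}` satisfies
`ω^{∧(n−1)}(v, w₁, …, w_{2n−3}) = 0` for all `w₁, …, w_{2n−3} ∈ W`. -/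
theorem hamiltonian_field_in_kernel_of_wedge_power (m : ℕ) (V : Type*)
    [AddCommGroup V] [Module ℝ V]
    (hdim : Module.finrank ℝ V = 2 * (m + 2))
    (ω : V [⋀^Fin 2]→ₗ[ℝ] ℝ)
    (hnd : ∀ x : V, x ≠ 0 → ∃ y : V, ω ![x, y] ≠ 0)
    (v : V) (w : Fin (2 * m + 1) → V)
    (hw : ∀ i, ω ![v, w i] = 0) :
    wedgePowTwoForm ω (m + 1) (Fin.cons v w) = 0 :=
  hamiltonian_field_in_kernel_of_wedge_power_general m V ω v w hw
end

section
/- Let n ≥ 2, let V be a real vector space of dimension 2n, let ω be a nondegenerate alternating 2-form on V, let v ∈ V be nonzero, let β be a linear form on V with β(v) = 1, and set W := {w ∈ V : ω(v, w) = 0}. Then for all w₁, …, w_{2n−2} ∈ W: (β ∧ ω^{∧(n−1)})(v, w₁, …, w_{2n−2}) = ω^{∧(n−1)}(w₁, …, w_{2n−2}). -/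
/-! Expanding `β ∧ ω^{n−1}` along the first slot, the term `i = 0` is `β(v)·ω^{n−1}(w) = ω^{n−1}(w)`.
Every other term evaluates `ω^{n−1}` on a tuple containing `v` together with vectors of `W`; since
`ω(v, ·)` vanishes on `v` and on `W`, each permutation term of that wedge power has a factor `0`. -/

open scoped BigOperators

/-- The wedge product of a linear form `β` with a `k`-form `ρ` (given as a function of
`k`-tuples): `(β ∧ ρ)(v₀, …, v_k) = Σ_i (−1)^i β(v_i) ρ(v₀, …, v̂_i, …, v_k)`. -/
noncomputable def wedgeOneFun {V : Type*} [AddCommGroup V] [Module ℝ V] {k : ℕ}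
    (β : V →ₗ[ℝ] ℝ) (ρ : (Fin k → V) → ℝ) (z : Fin (k + 1) → V) : ℝ :=
  ∑ i : Fin (k + 1), (-1 : ℝ) ^ (i : ℕ) * β (z i) * ρ (i.removeNth z)

lemma Fin.removeNth_succ_cons {α : Type*} {k : ℕ} (v : α) (w : Fin (k + 1) → α)
    (j : Fin (k + 1)) :
    j.succ.removeNth (Fin.cons v w : Fin (k + 2) → α) = Fin.cons v (j.removeNth w) := by
  funext i
  cases i using Fin.cases <;> simp [Fin.removeNth, Fin.succ_succAbove_succ]

section

variable {V : Type*} [AddCommGroup V] [Module ℝ V]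

lemma wedgeOneFun_cons_of_forall_removeNth {k : ℕ} (β : V →ₗ[ℝ] ℝ)
    (ρ : (Fin (k + 1) → V) → ℝ) (v : V) (w : Fin (k + 1) → V)
    (hρ : ∀ j : Fin (k + 1), ρ (Fin.cons v (j.removeNth w)) = 0) :
    wedgeOneFun β ρ (Fin.cons v w) = β v * ρ w := by
  rw [wedgeOneFun, Fin.sum_univ_succ]
  simp [Fin.removeNth_succ_cons, hρ]

lemma AlternatingMap.map_fin_two_swap (ω : V [⋀^Fin 2]→ₗ[ℝ] ℝ) (a b : V) :
    ω ![b, a] = -ω ![a, b] := by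
  convert ω.map_swap ![a, b] (show (0 : Fin 2) ≠ 1 by decide) using 2
  ext i
  fin_cases i <;> rfl

/-- Every term of the permutation sum contains a factor `ω(z j, ·)` or `ω(·, z j)`, namely the
pair in which `σ` places the index `j`. -/
lemma wedgePowTwoForm_eq_zero_of_isotropic (ω : V [⋀^Fin 2]→ₗ[ℝ] ℝ) {k : ℕ}
    (z : Fin (2 * k) → V) (j : Fin (2 * k)) (hj : ∀ i, ω ![z j, z i] = 0) :
    wedgePowTwoForm ω k z = 0 := by
  refine Finset.sum_eq_zero fun σ _ => mul_eq_zero_of_right _ ?_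
  set t := σ⁻¹ j
  have hσt : σ t = j := σ.apply_symm_apply j
  refine Finset.prod_eq_zero (i := ⟨t / 2, by omega⟩) (Finset.mem_univ _) ?_
  rcases Nat.even_or_odd' t with ⟨p, hp | hp⟩
  · have he : (⟨2 * (t / 2), by omega⟩ : Fin (2 * k)) = t := Fin.ext (by simp; omega)
    rw [he, hσt, hj]
  · have he : (⟨2 * (t / 2) + 1, by omega⟩ : Fin (2 * k)) = t := Fin.ext (by simp; omega)
    rw [he, hσt, ω.map_fin_two_swap, hj, neg_zero]

lemma wedgePowTwoForm_cons_eq_zero (ω : V [⋀^Fin 2]→ₗ[ℝ] ℝ) {k : ℕ} (v : V)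
    (u : Fin (2 * k + 1) → V) (hu : ∀ i, ω ![v, u i] = 0) :
    wedgePowTwoForm ω (k + 1) (Fin.cons v u) = 0 := by
  refine wedgePowTwoForm_eq_zero_of_isotropic ω _ 0 fun i => ?_
  cases i using Fin.cases with
  | zero => exact ω.map_eq_zero_of_eq _ (i := 0) (j := 1) rfl (by decide)
  | succ i => exact hu i

end

theorem liouville_contraction_identity_general (m : ℕ) (V : Type*)
    [AddCommGroup V] [Module ℝ V]
    (ω : V [⋀^Fin 2]→ₗ[ℝ] ℝ)
    (v : V)
    (β : V →ₗ[ℝ] ℝ) (hβ : β v = 1)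
    (w : Fin (2 * (m + 1)) → V)
    (hw : ∀ i, ω ![v, w i] = 0) :
    wedgeOneFun β (wedgePowTwoForm ω (m + 1)) (Fin.cons v w)
      = wedgePowTwoForm ω (m + 1) w := by
  rw [wedgeOneFun_cons_of_forall_removeNth, hβ, one_mul]
  exact fun j => wedgePowTwoForm_cons_eq_zero ω v _ fun i => hw _

/-- Let `n ≥ 2` (here `n = m + 2`), let `V` be a real vector space of
dimension `2n`, let `ω` be a nondegenerate alternating `2`-form on `V`, let `v ∈ V` be nonzero,
let `β` be a linear form with `β(v) = 1`, and set `W := {w : ω(v, w) = 0}`.  Then for all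
`w₁, …, w_{2n−2} ∈ W`:
`(β ∧ ω^{∧(n−1)})(v, w₁, …, w_{2n−2}) = ω^{∧(n−1)}(w₁, …, w_{2n−2})`. -/
theorem liouville_contraction_identity (m : ℕ) (V : Type*)
    [AddCommGroup V] [Module ℝ V]
    (hdim : Module.finrank ℝ V = 2 * (m + 2))
    (ω : V [⋀^Fin 2]→ₗ[ℝ] ℝ)
    (hnd : ∀ x : V, x ≠ 0 → ∃ y : V, ω ![x, y] ≠ 0)
    (v : V) (hv : v ≠ 0)
    (β : V →ₗ[ℝ] ℝ) (hβ : β v = 1)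
    (w : Fin (2 * (m + 1)) → V)
    (hw : ∀ i, ω ![v, w i] = 0) :
    wedgeOneFun β (wedgePowTwoForm ω (m + 1)) (Fin.cons v w)
      = wedgePowTwoForm ω (m + 1) w :=
  liouville_contraction_identity_general m V ω v β hβ w hw
end
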